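/- Let S be a commutative ring that is a ℚ-algebra and p ∈ S[X]. Then for every x ∈ S, Sum(p)(x+1) = p(x+1) + Sum(p)(x), where Sum(p)(y) denotes evaluation of the polynomial Sum(p) at y. -/
import Mathlib


open Polynomial

/-- The `d`-th Faulhaber polynomial over a commutative `ℚ`-algebra `S`:
`F_d := (1/(d+1)) ∑_{n=0}^{d} C(d+1,n) · B'_n · X^{d-n+1}`, where `B'_n` is the Bernoulli
number with the convention `B'_1 = +1/2`. -/
noncomputable def faulhaber (S : Type*) [CommRing S] [Algebra ℚ S] (d : ℕ) : Polynomial S :=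
  Polynomial.C (algebraMap ℚ S (1 / (d + 1))) *
    ∑ n ∈ Finset.range (d + 1),
      Polynomial.C (algebraMap ℚ S (((d + 1).choose n : ℚ) * bernoulli' n)) *
        Polynomial.X ^ (d - n + 1)

lemma faulhaber_eval_nat (d m : ℕ) :
    (faulhaber ℚ d).eval (m : ℚ) = ∑ k ∈ Finset.Ico 1 (m + 1), (k : ℚ) ^ d := by
  rw [sum_Ico_pow]
  simp only [faulhaber, eval_mul, eval_C, eval_finset_sum, eval_pow, eval_X,
    Algebra.algebraMap_self, RingHom.id_apply, Finset.mul_sum]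
  refine Finset.sum_congr rfl fun i hi => ?_
  rw [Nat.succ_sub (Finset.mem_range_succ_iff.mp hi), pow_succ]
  ring

lemma faulhaber_comp (d : ℕ) :
    (faulhaber ℚ d).comp (X + 1) = (X + 1) ^ d + faulhaber ℚ d := by
  apply Polynomial.eq_of_infinite_eval_eq
  apply Set.infinite_of_injective_forall_mem (f := (Nat.cast : ℕ → ℚ)) Nat.cast_injective
  intro m
  simp only [Set.mem_setOf_eq, eval_comp, eval_add, eval_one, eval_X, eval_pow]
  rw [show ((m : ℚ) + 1) = ((m + 1 : ℕ) : ℚ) by push_cast; ring, faulhaber_eval_nat,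
    faulhaber_eval_nat, Finset.sum_Ico_succ_top (by omega)]
  push_cast
  ring

lemma faulhaber_map {S : Type*} [CommRing S] [Algebra ℚ S] (d : ℕ) :
    faulhaber S d = (faulhaber ℚ d).map (algebraMap ℚ S) := by
  unfold faulhaber
  rw [Polynomial.map_mul, Polynomial.map_sum, Polynomial.map_C]
  simp only [Polynomial.map_mul, Polynomial.map_pow, Polynomial.map_C, Polynomial.map_X,
    Algebra.algebraMap_self, RingHom.id_apply]

lemma faulhaber_eval_add_one {S : Type*} [CommRing S] [Algebra ℚ S] (d : ℕ) (x : S) :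
    (faulhaber S d).eval (x + 1) = (x + 1) ^ d + (faulhaber S d).eval x := by
  have h := congrArg (Polynomial.map (algebraMap ℚ S)) (faulhaber_comp d)
  rw [Polynomial.map_comp] at h
  simp only [Polynomial.map_add, Polynomial.map_pow, Polynomial.map_one, Polynomial.map_X,
    ← faulhaber_map] at h
  have := congrArg (Polynomial.eval x) h
  simpa [eval_comp] using this

/-- For `p = ∑_{i} p_i X^i`, the polynomial `Sum(p) := ∑_{i} p_i · F_i`. -/
noncomputable def polySum {S : Type*} [CommRing S] [Algebra ℚ S] (p : Polynomial S) :
    Polynomial S :=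
  ∑ i ∈ Finset.range (p.natDegree + 1), Polynomial.C (p.coeff i) * faulhaber S i

/-- `Sum(p)(x+1) = p(x+1) + Sum(p)(x)` for every `x` in a commutative `ℚ`-algebra. -/
theorem polySum_eval_add_one {S : Type*} [CommRing S] [Algebra ℚ S] (p : Polynomial S)
    (x : S) :
    (polySum p).eval (x + 1) = p.eval (x + 1) + (polySum p).eval x := by
  simp only [polySum, eval_finset_sum, eval_mul, eval_C, faulhaber_eval_add_one, mul_add,
    Finset.sum_add_distrib]
  rw [p.eval_eq_sum_range]
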